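/- Let c be a positive definite symmetric real m×m matrix and let U_c be the Schrödinger representation of the Heisenberg group H_ℝ^{(n,m)}. Define, for f : ℝ^{(m,n)} → ℂ: (T_b f)(x) = exp(2πi σ(c x b ᵗx)) f(x) for a real symmetric n×n matrix b; (D_a f)(x) = f(x ᵗa) for a ∈ GL(n,ℝ); and (F_c f)(x) = ∫_{ℝ^{(m,n)}} f(y) exp(−4πi σ(c y ᵗx)) dy for integrable f. Then for every g = (λ,μ,κ) ∈ H_ℝ^{(n,m)}: (i) T_b(U_c(g)f) = U_c((λ, −λb+μ, κ))(T_b f); (ii) D_a(U_c(g)f) = U_c((λᵗa^{-1}, μa, κ))(D_a f); (iii) for integrable f, F_c(U_c(g)f) = U_c((−μ, λ, κ))(F_c f). (Here (λ, −λb+μ, κ), (λᵗa^{-1}, μa, κ), (−μ, λ, κ) are the conjugates of g by the symplectic generators t_b, d_a, σ_n respectively; these operators are scalar multiples of the Weil representation operators ω_c(t_b), ω_c(d_a), ω_c(σ_n), and scalar factors do not affect the intertwining relations.) -/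
import Mathlib


open Matrix MeasureTheory

/-- The Schrödinger representation `U_c(λ,μ,κ)` of the Heisenberg group `H_ℝ^{(n,m)}`:
`(U_c(g)f)(x) = exp(2πi σ(c(κ + μᵗλ + 2xᵗμ))) f(x+λ)`. -/
noncomputable def Uc {m n : ℕ} (c : Matrix (Fin m) (Fin m) ℝ)
    (lam mu : Fin m → Fin n → ℝ) (ka : Matrix (Fin m) (Fin m) ℝ)
    (f : (Fin m → Fin n → ℝ) → ℂ) (x : Fin m → Fin n → ℝ) : ℂ :=
  Complex.exp (2 * (Real.pi : ℂ) * Complex.I * Complex.ofReal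
      (Matrix.trace (c * (ka + Matrix.of mu * (Matrix.of lam)ᵀ +
        2 • (Matrix.of x * (Matrix.of mu)ᵀ))))) *
    f (x + lam)

/-- The multiplication operator `(T_b f)(x) = exp(2πi σ(c x b ᵗx)) f(x)`. -/
noncomputable def Tb {m n : ℕ} (c : Matrix (Fin m) (Fin m) ℝ) (b : Matrix (Fin n) (Fin n) ℝ)
    (f : (Fin m → Fin n → ℝ) → ℂ) (x : Fin m → Fin n → ℝ) : ℂ :=
  Complex.exp (2 * (Real.pi : ℂ) * Complex.I * Complex.ofReal
      (Matrix.trace (c * (Matrix.of x * b * (Matrix.of x)ᵀ)))) * f x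

/-- The substitution operator `(D_a f)(x) = f(x ᵗa)`. -/
noncomputable def Da {m n : ℕ} (a : Matrix (Fin n) (Fin n) ℝ)
    (f : (Fin m → Fin n → ℝ) → ℂ) (x : Fin m → Fin n → ℝ) : ℂ :=
  f (Matrix.of.symm (Matrix.of x * aᵀ))

/-- The twisted Fourier transform `(F_c f)(x) = ∫ f(y) exp(−4πi σ(c y ᵗx)) dy`. -/
noncomputable def Fc {m n : ℕ} (c : Matrix (Fin m) (Fin m) ℝ)
    (f : (Fin m → Fin n → ℝ) → ℂ) (x : Fin m → Fin n → ℝ) : ℂ :=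
  ∫ y : Fin m → Fin n → ℝ,
    f y * Complex.exp (-(4 * (Real.pi : ℂ) * Complex.I) * Complex.ofReal
      (Matrix.trace (c * (Matrix.of y * (Matrix.of x)ᵀ))))


lemma tr_symm' {m : ℕ} {c : Matrix (Fin m) (Fin m) ℝ} (hc : c.IsSymm)
    (M : Matrix (Fin m) (Fin m) ℝ) : Matrix.trace (c * Mᵀ) = Matrix.trace (c * M) := by
  rw [← Matrix.trace_transpose (c * Mᵀ), Matrix.transpose_mul, Matrix.transpose_transpose,
    hc.eq, Matrix.trace_mul_comm]

lemma tr_flip' {m n : ℕ} {c : Matrix (Fin m) (Fin m) ℝ} (hc : c.IsSymm)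
    {b : Matrix (Fin n) (Fin n) ℝ} (hb : b.IsSymm) (u v : Matrix (Fin m) (Fin n) ℝ) :
    Matrix.trace (c * (u * (b * vᵀ))) = Matrix.trace (c * (v * (b * uᵀ))) := by
  rw [← tr_symm' hc (v * (b * uᵀ))]
  congr 1
  simp [Matrix.transpose_mul, Matrix.mul_assoc, hb.eq]

lemma tr_flip1' {m n : ℕ} {c : Matrix (Fin m) (Fin m) ℝ} (hc : c.IsSymm)
    (u v : Matrix (Fin m) (Fin n) ℝ) :
    Matrix.trace (c * (u * vᵀ)) = Matrix.trace (c * (v * uᵀ)) := by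
  rw [← tr_symm' hc (v * uᵀ)]
  congr 1
  simp [Matrix.transpose_mul]

/-- The operators `T_b`, `D_a`, `F_c` intertwine `U_c(g)` with `U_c` at the conjugate of `g`
by the corresponding symplectic generator. -/
theorem stmt14 {m n : ℕ} (c : Matrix (Fin m) (Fin m) ℝ) (hc : c.PosDef) (hcsymm : c.IsSymm)
    (lam mu : Fin m → Fin n → ℝ) (ka : Matrix (Fin m) (Fin m) ℝ)
    (hka : (ka + Matrix.of mu * (Matrix.of lam)ᵀ).IsSymm) :
    (∀ (b : Matrix (Fin n) (Fin n) ℝ), b.IsSymm →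
      ∀ (f : (Fin m → Fin n → ℝ) → ℂ) (x : Fin m → Fin n → ℝ),
        Tb c b (Uc c lam mu ka f) x =
          Uc c lam (Matrix.of.symm (-(Matrix.of lam * b) + Matrix.of mu)) ka (Tb c b f) x) ∧
    (∀ (a : Matrix (Fin n) (Fin n) ℝ), IsUnit a →
      ∀ (f : (Fin m → Fin n → ℝ) → ℂ) (x : Fin m → Fin n → ℝ),
        Da a (Uc c lam mu ka f) x =
          Uc c (Matrix.of.symm (Matrix.of lam * (a⁻¹)ᵀ)) (Matrix.of.symm (Matrix.of mu * a))
            ka (Da a f) x) ∧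
    (∀ f : (Fin m → Fin n → ℝ) → ℂ, Integrable f (volume : Measure (Fin m → Fin n → ℝ)) →
      ∀ x : Fin m → Fin n → ℝ,
        Fc c (Uc c lam mu ka f) x = Uc c (-mu) lam ka (Fc c f) x) := by
  refine ⟨?_, ?_, ?_⟩
  · intro b hb f x
    simp only [Tb, Uc, Equiv.apply_symm_apply]
    rw [← mul_assoc, ← mul_assoc, ← Complex.exp_add, ← Complex.exp_add]
    congr 2
    rw [← mul_add, ← mul_add]
    congr 1
    rw [← Complex.ofReal_add, ← Complex.ofReal_add]
    congr 1
    rw [show Matrix.of (x + lam) = Matrix.of x + Matrix.of lam from rfl]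
    simp only [Matrix.mul_add, Matrix.add_mul, Matrix.trace_add, Matrix.transpose_add,
      Matrix.transpose_mul, Matrix.transpose_transpose, Matrix.neg_mul, Matrix.mul_neg,
      Matrix.trace_neg, Matrix.transpose_neg, hb.eq, Matrix.smul_mul, Matrix.mul_smul,
      Matrix.trace_smul, smul_eq_mul, Matrix.mul_assoc, Matrix.add_mul]
    rw [tr_flip' hcsymm hb (Matrix.of lam) (Matrix.of x)]
    ring
  · intro a ha f x
    have h1 : a * a⁻¹ = 1 := Matrix.mul_nonsing_inv a ((Matrix.isUnit_iff_isUnit_det a).mp ha)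
    have e1 : Matrix.of mu * a * (Matrix.of lam * (a⁻¹)ᵀ)ᵀ =
        Matrix.of mu * (Matrix.of lam)ᵀ := by
      rw [Matrix.transpose_mul, Matrix.transpose_transpose, ← Matrix.mul_assoc,
        Matrix.mul_assoc (Matrix.of mu) a, h1, Matrix.mul_one]
    have e2 : Matrix.of x * (Matrix.of mu * a)ᵀ = Matrix.of x * aᵀ * (Matrix.of mu)ᵀ := by
      rw [Matrix.transpose_mul, ← Matrix.mul_assoc]
    simp only [Da, Uc, Equiv.apply_symm_apply, e1, e2]
    congr 2
    show Matrix.of x * aᵀ + Matrix.of lam = (Matrix.of x + Matrix.of lam * (a⁻¹)ᵀ) * aᵀ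
    rw [Matrix.add_mul, Matrix.mul_assoc, ← Matrix.transpose_mul, h1, Matrix.transpose_one,
      Matrix.mul_one]
  · intro f _ x
    simp only [Fc, Uc]
    rw [← MeasureTheory.integral_const_mul]
    rw [← integral_add_right_eq_self (μ := volume)
      (fun y => Complex.exp (2 * (Real.pi : ℂ) * Complex.I * Complex.ofReal
        (Matrix.trace (c * (ka + Matrix.of lam * (Matrix.of (-mu))ᵀ +
          2 • (Matrix.of x * (Matrix.of lam)ᵀ))))) *
        (f y * Complex.exp (-(4 * (Real.pi : ℂ) * Complex.I) * Complex.ofReal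
          (Matrix.trace (c * (Matrix.of y * (Matrix.of (x + -mu))ᵀ)))))) lam]
    congr 1
    funext y
    rw [mul_right_comm, ← Complex.exp_add]
    rw [mul_comm (f (y + lam)) _, ← mul_assoc, ← Complex.exp_add]
    congr 2
    have hr : Matrix.trace (c * (ka + Matrix.of mu * (Matrix.of lam)ᵀ +
          2 • (Matrix.of y * (Matrix.of mu)ᵀ)))
        - 2 * Matrix.trace (c * (Matrix.of y * (Matrix.of x)ᵀ)) =
        Matrix.trace (c * (ka + Matrix.of lam * (Matrix.of (-mu))ᵀ +
          2 • (Matrix.of x * (Matrix.of lam)ᵀ)))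
        - 2 * Matrix.trace (c * (Matrix.of (y + lam) * (Matrix.of (x + -mu))ᵀ)) := by
      rw [show Matrix.of (y + lam) = Matrix.of y + Matrix.of lam from rfl,
        show Matrix.of (x + -mu) = Matrix.of x - Matrix.of mu from rfl,
        show Matrix.of (-mu) = -Matrix.of mu from rfl]
      simp only [Matrix.mul_add, Matrix.add_mul, Matrix.sub_mul, Matrix.mul_sub,
        Matrix.trace_add, Matrix.trace_sub, Matrix.transpose_add, Matrix.transpose_sub,
        Matrix.transpose_mul, Matrix.transpose_transpose, Matrix.transpose_neg,
        Matrix.neg_mul, Matrix.mul_neg, Matrix.trace_neg, Matrix.smul_mul, Matrix.mul_smul,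
        Matrix.trace_smul, smul_eq_mul, Matrix.mul_assoc]
      rw [tr_flip1' hcsymm (Matrix.of mu) (Matrix.of lam),
        tr_flip1' hcsymm (Matrix.of lam) (Matrix.of x)]
      ring
    have hc2 := congrArg (Complex.ofReal) hr
    push_cast at hc2
    linear_combination (2 * (Real.pi : ℂ) * Complex.I) * hc2
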